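/- Let φ be an alternating p-form of comass one on a finite-dimensional real inner product space V, and for v, w ∈ V let v∘w be the symmetric endomorphism of V given by (v∘w)(u) = ½(⟨w,u⟩ v + ⟨v,u⟩ w). Then for every φ-plane ξ = (e₁,…,e_p) ∈ G(φ), λ_φ(v∘w)(e₁,…,e_p) = ⟨P_ξ v, P_ξ w⟩, where P_ξ is the orthogonal projection onto span{e₁,…,e_p}. (Lemma B.2) -/

import Mathlib

open scoped RealInnerProductSpace

noncomputable section

variable {V : Type*} [NormedAddCommGroup V] [InnerProductSpace ℝ V] [FiniteDimensional ℝ V]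

/-- `λ_φ(A)`, the action of the endomorphism `A` on the alternating `p`-form `φ` as a
derivation: `λ_φ(A)(v₁,…,v_p) = Σ_k φ(v₁,…,A v_k,…,v_p)`. -/
def lambdaForm {p : ℕ} (φ : V [⋀^Fin p]→ₗ[ℝ] ℝ) (A : V →ₗ[ℝ] V) (v : Fin p → V) : ℝ :=
  ∑ k, φ (Function.update v k (A (v k)))

/-- The symmetric endomorphism `v ∘ w` of `V`, `(v∘w)(u) = ½(⟨w,u⟩ v + ⟨v,u⟩ w)`. -/
def symProd (v w : V) : V →ₗ[ℝ] V :=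
  ((1 : ℝ) / 2) • ((innerₛₗ ℝ w).smulRight v + (innerₛₗ ℝ v).smulRight w)

/-- The orthogonal projection of `V` onto `span{e₁,…,e_p}`, as a map `V → V`. -/
def projSpan {p : ℕ} (e : Fin p → V) (v : V) : V :=
  (Submodule.orthogonalProjection (Submodule.span ℝ (Set.range e)) v : V)

/-! At a `φ`-plane `e`, the linear function `x ↦ φ(e₁,…,x,…,e_p)` (with `x` in slot `k`) agrees
with `⟪e_k, x⟫` on `span e`, and it vanishes on the orthogonal complement: if `u ⊥ e` and
`c = φ(e₁,…,u,…,e_p)`, then applying the comass bound to the direction of `‖u‖² e_k + c u` gives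
`(‖u‖² + c²)² ≤ ‖u‖² (‖u‖² + c²)`, which forces `c = 0`. Hence `λ_φ(A)(e) = ∑ₖ ⟪e_k, A e_k⟫`,
and for `A = v∘w` this is `∑ₖ ⟪e_k, v⟫ ⟪e_k, w⟫ = ⟪P_ξ v, P_ξ w⟫`. -/

open Function Submodule

section

variable {E : Type*} [NormedAddCommGroup E] [InnerProductSpace ℝ E] {ι : Type*} [DecidableEq ι]
  {φ : E [⋀^ι]→ₗ[ℝ] ℝ} {e : ι → E}

theorem Orthonormal.update (he : Orthonormal ℝ e) (k : ι) {x : E} (hx : ‖x‖ = 1)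
    (hxe : ∀ i ≠ k, ⟪e i, x⟫ = 0) : Orthonormal ℝ (update e k x) := by
  refine ⟨fun i => ?_, fun i j hij => ?_⟩
  · rcases eq_or_ne i k with rfl | hik
    · rwa [update_self]
    · rw [update_of_ne hik, he.norm_eq_one]
  · rcases eq_or_ne i k with rfl | hik
    · rw [update_self, update_of_ne hij.symm, real_inner_comm, hxe j hij.symm]
    rcases eq_or_ne j k with rfl | hjk
    · rw [update_self, update_of_ne hij, hxe i hij]
    · rw [update_of_ne hik, update_of_ne hjk, he.inner_eq_zero hij]

theorem AlternatingMap.apply_update_le_norm (hφ : ∀ f : ι → E, Orthonormal ℝ f → φ f ≤ 1)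
    (he : Orthonormal ℝ e) (k : ι) {x : E} (hxe : ∀ i ≠ k, ⟪e i, x⟫ = 0) :
    φ (update e k x) ≤ ‖x‖ := by
  rcases eq_or_ne x 0 with rfl | hx
  · simp
  have hx' : ‖x‖ ≠ 0 := norm_ne_zero_iff.mpr hx
  have hunit : Orthonormal ℝ (update e k (‖x‖⁻¹ • x)) :=
    he.update k (by rw [norm_smul, norm_inv, norm_norm, inv_mul_cancel₀ hx'])
      fun i hi => by rw [real_inner_smul_right, hxe i hi, mul_zero]
  calc φ (update e k x) = ‖x‖ * φ (update e k (‖x‖⁻¹ • x)) := by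
        rw [φ.map_update_smul, smul_eq_mul, mul_inv_cancel_left₀ hx']
    _ ≤ ‖x‖ * 1 := by gcongr; exact hφ _ hunit
    _ = ‖x‖ := mul_one _

theorem AlternatingMap.apply_update_eq_zero_of_forall_inner_eq_zero
    (hφ : ∀ f : ι → E, Orthonormal ℝ f → φ f ≤ 1) (he : Orthonormal ℝ e) (heφ : φ e = 1)
    (k : ι) {u : E} (hu : ∀ i, ⟪e i, u⟫ = 0) : φ (update e k u) = 0 := by
  set c := φ (update e k u)
  set a := ‖u‖ ^ 2
  have hval : φ (update e k (a • e k + c • u)) = a + c ^ 2 := by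
    rw [φ.map_update_add, φ.map_update_smul, φ.map_update_smul, update_eq_self, heφ]
    simp only [smul_eq_mul]
    ring
  have hnorm : ‖a • e k + c • u‖ ^ 2 = a * (a + c ^ 2) := by
    rw [norm_add_sq_real, real_inner_smul_left, real_inner_smul_right, hu, norm_smul, norm_smul,
      he.norm_eq_one, Real.norm_eq_abs, Real.norm_eq_abs, mul_pow, mul_pow, sq_abs, sq_abs]
    ring
  have hle := φ.apply_update_le_norm hφ he k (x := a • e k + c • u) fun i hi => by
    rw [inner_add_right, real_inner_smul_right, real_inner_smul_right, he.inner_eq_zero hi, hu]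
    ring
  rw [hval] at hle
  have hsq : (a + c ^ 2) ^ 2 ≤ a * (a + c ^ 2) := by
    rw [← hnorm]
    exact pow_le_pow_left₀ (by positivity) hle 2
  have ha : 0 ≤ a := by positivity
  have : c ^ 4 ≤ 0 := by nlinarith [sq_nonneg c]
  exact pow_eq_zero_iff (n := 4) (by norm_num) |>.mp (le_antisymm this (by positivity))

theorem AlternatingMap.apply_update_of_mem_span (he : Orthonormal ℝ e) (heφ : φ e = 1) (k : ι)
    {x : E} (hx : x ∈ span ℝ (Set.range e)) : φ (update e k x) = ⟪e k, x⟫ := by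
  induction hx using Submodule.span_induction with
  | mem x hx =>
    obtain ⟨i, rfl⟩ := hx
    rcases eq_or_ne i k with rfl | hik
    · rw [update_eq_self, heφ, real_inner_self_eq_norm_sq, he.norm_eq_one, one_pow]
    · rw [he.inner_eq_zero hik.symm]
      exact φ.map_eq_zero_of_eq _ (i := i) (j := k)
        (by rw [update_of_ne hik, update_self]) hik
  | zero => simp
  | add x y _ _ hx hy => rw [φ.map_update_add, hx, hy, inner_add_right]
  | smul r x _ hx => rw [φ.map_update_smul, hx, real_inner_smul_right, smul_eq_mul]

theorem AlternatingMap.apply_update_eq_inner [Fintype ι]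
    (hφ : ∀ f : ι → E, Orthonormal ℝ f → φ f ≤ 1) (he : Orthonormal ℝ e) (heφ : φ e = 1)
    (k : ι) (x : E) : φ (update e k x) = ⟪e k, x⟫ := by
  set y := ∑ i, ⟪e i, x⟫ • e i
  have hy : y ∈ span ℝ (Set.range e) :=
    sum_mem fun i _ => smul_mem _ _ (subset_span ⟨i, rfl⟩)
  have hperp : ∀ i, ⟪e i, x - y⟫ = 0 := fun i => by
    rw [inner_sub_right, he.inner_right_fintype, sub_self]
  calc φ (update e k x) = φ (update e k y) + φ (update e k (x - y)) := by
        rw [← φ.map_update_add, add_sub_cancel]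
    _ = ⟪e k, y⟫ + ⟪e k, x - y⟫ := by
        rw [φ.apply_update_of_mem_span he heφ k hy,
          φ.apply_update_eq_zero_of_forall_inner_eq_zero hφ he heφ k hperp, hperp]
    _ = ⟪e k, x⟫ := by rw [← inner_add_right, add_sub_cancel]

theorem lambdaForm_eq_sum_inner {p : ℕ} {φ : E [⋀^Fin p]→ₗ[ℝ] ℝ}
    (hφ : ∀ f : Fin p → E, Orthonormal ℝ f → φ f ≤ 1) {e : Fin p → E} (he : Orthonormal ℝ e)
    (heφ : φ e = 1) (A : E →ₗ[ℝ] E) : lambdaForm φ A e = ∑ k, ⟪e k, A (e k)⟫ :=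
  Finset.sum_congr rfl fun k _ => φ.apply_update_eq_inner hφ he heφ k _

theorem inner_symProd_apply_self (v w u : E) : ⟪u, symProd v w u⟫ = ⟪u, v⟫ * ⟪u, w⟫ := by
  simp only [symProd, LinearMap.smul_apply, LinearMap.add_apply, LinearMap.smulRight_apply,
    innerₛₗ_apply_apply, real_inner_smul_right, inner_add_right, real_inner_comm u]
  ring

end

theorem inner_projSpan_projSpan {p : ℕ} {e : Fin p → V} (he : Orthonormal ℝ e) (v w : V) :
    ⟪projSpan e v, projSpan e w⟫ = ∑ k, ⟪e k, v⟫ * ⟪e k, w⟫ := by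
  let b := (Module.Basis.span he.linearIndependent).toOrthonormalBasis (by
    rw [funext (Module.Basis.span_apply he.linearIndependent)]
    exact orthonormal_span he)
  rw [projSpan, projSpan, ← coe_inner, ← b.sum_inner_mul_inner]
  refine Finset.sum_congr rfl fun k _ => ?_
  simp [b, Module.Basis.span_apply, real_inner_comm]

theorem lambdaForm_symProd_eq_inner_proj {p : ℕ}
    (φ : V [⋀^Fin p]→ₗ[ℝ] ℝ)
    (hcomass : ∀ e : Fin p → V, Orthonormal ℝ e → φ e ≤ 1)
    (v w : V) (e : Fin p → V) (he : Orthonormal ℝ e) (heφ : φ e = 1) :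
    lambdaForm φ (symProd v w) e = ⟪projSpan e v, projSpan e w⟫ := by
  simp only [lambdaForm_eq_sum_inner hcomass he heφ, inner_symProd_apply_self,
    inner_projSpan_projSpan he]
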